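/- arXiv:2510.20765 — 2 statements merged into one kernel-verified Lean document; each statement's English description precedes it below -/
import Mathlib

section
/- There is an absolute constant c* > 0 such that the following holds for every λ with 0 < λ ≤ c*. Let n ∈ ℕ, d, δ > 0, K ∈ 𝒦_d(n), and let F be a graph on [n] satisfying: (B1) d_{F∖K}(v) ≤ (1+λ)δ for every v ∈ [n]; (B2) for every v ∈ [n], Σ_{u ∈ N_{F∖K}(v)} Σ_{u' ∈ N_K(u)} d_{F∖K}(u') ≤ (1 + λ/log n)·δ·d·d_{F∖K}(v). Then for every integer ℓ with 1 ≤ ℓ ≤ 10·log n and every v ∈ [n], the number of (F∖K, K)-alternating paths of length 2ℓ starting at v is at most (1+30λ)·d^ℓ·δ^ℓ. (Lemma 5.2.) -/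
/-!
Forgetting that the vertices must be distinct, alternating paths are bounded by alternating
walks. Their number `W_k(x)` satisfies `W_{k+2}(x) = ∑_{y ∈ N_{F∖K}(x)} ∑_{z ∈ N_K(y)} W_k(z)`.
As `K` is `d`-regular, `W_2 = d · d_{F∖K}`, and (B2) says that `d_{F∖K}` is a sub-eigenvector of
this two-step operator with eigenvalue `C δ d`, where `C = 1 + λ / log n`. Hence
`W_{2ℓ}(v) ≤ (C δ d)^(ℓ-1) · d · d_{F∖K}(v)`, and (B1) together with
`C^(ℓ-1) ≤ exp (10 λ)` (from `ℓ ≤ 10 log n`) and `exp (10 λ) (1 + λ) ≤ 1 + 30 λ` for `λ ≤ 1/100`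
gives the bound.
-/

open scoped Classical ENNReal

noncomputable section

namespace Sandwich

variable {n : ℕ}

/-- The degree of the vertex `v` in the graph `G`. -/
def deg (G : SimpleGraph (Fin n)) (v : Fin n) : ℕ := Nat.card (G.neighborSet v)

/-- `G` is a `d`-regular graph. -/
def IsRegularGraph (G : SimpleGraph (Fin n)) (d : ℕ) : Prop := ∀ v, deg G v = d

/-- The number of edges of `G`. -/
def edgeCount (G : SimpleGraph (Fin n)) : ℕ := G.edgeSet.ncard

/-- The probability of the event `P` under the probability mass function `μ`. -/
def prEvent {α : Type*} (μ : PMF α) (P : α → Prop) : ℝ≥0∞ := ∑' a, if P a then μ a else 0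

/-- `μ` is the uniform distribution on the set `S`. -/
def IsUniformOn {α : Type*} (μ : PMF α) (S : Set α) : Prop :=
  ∀ a, μ a = if a ∈ S then (S.ncard : ℝ≥0∞)⁻¹ else 0

/-- `P` lists the `k+1` vertices of a `(G₁,G₂)`-alternating path of length `k`: the vertices
are distinct and consecutive vertices are joined by an edge of `G₁` (for steps of even index)
or of `G₂` (for steps of odd index). -/
def IsAltSeq (G₁ G₂ : SimpleGraph (Fin n)) (k : ℕ) (P : Fin (k + 1) → Fin n) : Prop :=
  Function.Injective P ∧
    ∀ i : Fin k, if (i : ℕ) % 2 = 0 then G₁.Adj (P i.castSucc) (P i.succ)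
      else G₂.Adj (P i.castSucc) (P i.succ)

/-- The number of `(G₁,G₂)`-alternating `x,y`-paths of length `k` with no internal vertex
in `Z`. -/
def altPathCount (G₁ G₂ : SimpleGraph (Fin n)) (k : ℕ) (x y : Fin n) (Z : Set (Fin n)) : ℕ :=
  Nat.card {P : Fin (k + 1) → Fin n // IsAltSeq G₁ G₂ k P ∧ P 0 = x ∧ P (Fin.last k) = y ∧
    ∀ i : Fin (k + 1), i ≠ 0 → i ≠ Fin.last k → P i ∉ Z}

/-- The number of `(G₁,G₂)`-alternating paths of length `k` starting at `x`. -/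
def altStartCount (G₁ G₂ : SimpleGraph (Fin n)) (k : ℕ) (x : Fin n) : ℕ :=
  Nat.card {P : Fin (k + 1) → Fin n // IsAltSeq G₁ G₂ k P ∧ P 0 = x}

/-- The external neighbourhood `N_G(U)` of a set of vertices `U`. -/
def nbhd (G : SimpleGraph (Fin n)) (U : Set (Fin n)) : Set (Fin n) :=
  {v | v ∉ U ∧ ∃ u ∈ U, G.Adj u v}

/-- `e_G(U)`, the number of edges of `G` with both endpoints in `U`. -/
def edgesWithin (G : SimpleGraph (Fin n)) (U : Set (Fin n)) : ℕ :=
  {e ∈ G.edgeSet | ∀ v ∈ e, v ∈ U}.ncard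

/-- `e_G(U,V) = |{(u,v) : u ∈ U, v ∈ V, uv ∈ E(G)}|`. -/
def edgesBetween (G : SimpleGraph (Fin n)) (U V : Set (Fin n)) : ℕ :=
  {p : Fin n × Fin n | p.1 ∈ U ∧ p.2 ∈ V ∧ G.Adj p.1 p.2}.ncard

/-- `|E_{≥2,G}(U)|`, the number of edges `xy ∈ E(G)` with `x ∈ U`, `y ∉ U` such that some
`x' ∈ U ∖ {x}` also satisfies `x'y ∈ E(G)`. -/
def E2count (G : SimpleGraph (Fin n)) (U : Set (Fin n)) : ℕ :=
  {e : Sym2 (Fin n) | e ∈ G.edgeSet ∧ ∃ x y, e = s(x, y) ∧ x ∈ U ∧ y ∉ U ∧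
    ∃ x' ∈ U, x' ≠ x ∧ G.Adj x' y}.ncard

/-- `Σ_{u ∈ N_{F∖K}(v)} Σ_{u' ∈ N_K(u)} d_{F∖K}(u')`. -/
def doubleDegSum (F K : SimpleGraph (Fin n)) (v : Fin n) : ℝ :=
  ∑ u : Fin n, if (F \ K).Adj v u then
    ∑ u' : Fin n, if K.Adj u u' then (deg (F \ K) u' : ℝ) else 0
  else 0

/-- `μ` is the law of the binomial random graph `G(n,p)`. -/
def IsGnp (μ : PMF (SimpleGraph (Fin n))) (p : ℝ) : Prop :=
  ∀ G, μ G = ENNReal.ofReal (p ^ edgeCount G * (1 - p) ^ (n.choose 2 - edgeCount G))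

/-- `μ` is the law of `G(n,p)`, where `p` is truncated to `[0,1]` (so that `G(n,p)` is the
empty graph for `p ≤ 0` and the complete graph for `p ≥ 1`). -/
def IsGnpLaw (μ : PMF (SimpleGraph (Fin n))) (p : ℝ) : Prop :=
  IsGnp μ (max 0 (min p 1))

/-- `μ` is the law of `K + E`, where `E` includes each pair not in `E(K)` independently with
probability `p`. -/
def IsAddGnp (μ : PMF (SimpleGraph (Fin n))) (K : SimpleGraph (Fin n)) (p : ℝ) : Prop :=
  ∀ F, μ F = if K ≤ F then
      ENNReal.ofReal (p ^ (edgeCount F - edgeCount K) * (1 - p) ^ (n.choose 2 - edgeCount F))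
    else 0

/-- `ν` is the joint law of `(K, F)` where `K ~ G_d(n)` is a uniformly random `d`-regular graph
and `F = K + E`, `E` including each pair not in `E(K)` independently with probability `p`. -/
def IsRegAddGnp (ν : PMF (SimpleGraph (Fin n) × SimpleGraph (Fin n))) (d : ℕ) (p : ℝ) : Prop :=
  ∀ w, ν w = if IsRegularGraph w.1 d ∧ w.1 ≤ w.2 then
      ({G : SimpleGraph (Fin n) | IsRegularGraph G d}.ncard : ℝ≥0∞)⁻¹ *
        ENNReal.ofReal (p ^ (edgeCount w.2 - edgeCount w.1) *
          (1 - p) ^ (n.choose 2 - edgeCount w.2))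
    else 0

/-- `ν` is the joint law of an independent pair `(K, F)` with `K ~ G_d(n)` and `F ~ G(n,q)`. -/
def IsRegIndepGnp (ν : PMF (SimpleGraph (Fin n) × SimpleGraph (Fin n))) (d : ℕ) (q : ℝ) :
    Prop :=
  ∀ w, ν w = (if IsRegularGraph w.1 d then
      ({G : SimpleGraph (Fin n) | IsRegularGraph G d}.ncard : ℝ≥0∞)⁻¹ else 0) *
      ENNReal.ofReal (q ^ edgeCount w.2 * (1 - q) ^ (n.choose 2 - edgeCount w.2))

section AlternatingWalks

variable {V : Type*} (G₁ G₂ : SimpleGraph V)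

def IsAltWalk (k : ℕ) (P : Fin (k + 1) → V) : Prop :=
  ∀ i : Fin k, if (i : ℕ) % 2 = 0 then G₁.Adj (P i.castSucc) (P i.succ)
    else G₂.Adj (P i.castSucc) (P i.succ)

def altWalkCount (k : ℕ) (x : V) : ℕ :=
  Nat.card {P : Fin (k + 1) → V // IsAltWalk G₁ G₂ k P ∧ P 0 = x}

variable {G₁ G₂}

lemma isAltWalk_succ_iff {k : ℕ} {P : Fin (k + 2) → V} :
    IsAltWalk G₁ G₂ (k + 1) P ↔ G₁.Adj (P 0) (P 1) ∧ IsAltWalk G₂ G₁ k (Fin.tail P) := by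
  refine Fin.forall_fin_succ.trans (and_congr (by simp [Fin.castSucc_zero]) (forall_congr' ?_))
  intro i
  rw [← Fin.succ_castSucc, Fin.val_succ, Fin.tail, Fin.tail]
  rcases Nat.mod_two_eq_zero_or_one i with h | h <;> simp [h, Nat.succ_mod_two_eq_zero_iff]

lemma altWalkCount_zero (x : V) : altWalkCount G₁ G₂ 0 x = 1 := by
  rw [altWalkCount, Nat.card_eq_one_iff_unique]
  refine ⟨⟨fun P Q => Subtype.ext (funext fun i => ?_)⟩, ⟨⟨fun _ => x, fun i => i.elim0, rfl⟩⟩⟩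
  rw [Fin.fin_one_eq_zero i, P.2.2, Q.2.2]

variable [Fintype V] [DecidableRel G₁.Adj]

def altWalksSuccEquiv (k : ℕ) (x : V) :
    {P : Fin (k + 2) → V // IsAltWalk G₁ G₂ (k + 1) P ∧ P 0 = x} ≃
      Σ y : G₁.neighborFinset x, {Q : Fin (k + 1) → V // IsAltWalk G₂ G₁ k Q ∧ Q 0 = y} where
  toFun P := ⟨⟨P.1 1, by
      simpa [← P.2.2] using (isAltWalk_succ_iff.1 P.2.1).1⟩,
    ⟨Fin.tail P.1, (isAltWalk_succ_iff.1 P.2.1).2, rfl⟩⟩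
  invFun Q := ⟨Fin.cons x Q.2.1, isAltWalk_succ_iff.2 ⟨by
      simpa [← Q.2.2.2] using Q.1.2, by simpa using Q.2.2.1⟩, rfl⟩
  left_inv P := by
    obtain ⟨P, hP, rfl⟩ := P
    simp [Fin.cons_self_tail]
  right_inv Q := Sigma.subtype_ext (Subtype.ext Q.2.2.2) rfl

lemma altWalkCount_succ (k : ℕ) (x : V) :
    altWalkCount G₁ G₂ (k + 1) x = ∑ y ∈ G₁.neighborFinset x, altWalkCount G₂ G₁ k y := by
  rw [altWalkCount, Nat.card_congr (altWalksSuccEquiv k x), Nat.card_sigma]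
  exact Finset.sum_coe_sort (G₁.neighborFinset x) (altWalkCount G₂ G₁ k)

variable [DecidableRel G₂.Adj]

lemma altWalkCount_add_two (k : ℕ) (x : V) :
    altWalkCount G₁ G₂ (k + 2) x =
      ∑ y ∈ G₁.neighborFinset x, ∑ z ∈ G₂.neighborFinset y, altWalkCount G₁ G₂ k z := by
  rw [altWalkCount_succ]
  exact Finset.sum_congr rfl fun y _ => altWalkCount_succ k y

lemma altWalkCount_two_mul_add_two_le {d : ℕ} {c : ℝ} (hc : 0 ≤ c)
    (hreg : G₂.IsRegularOfDegree d)
    (hsum : ∀ x, ∑ y ∈ G₁.neighborFinset x, ∑ z ∈ G₂.neighborFinset y, (G₁.degree z : ℝ) ≤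
      c * G₁.degree x) (k : ℕ) (x : V) :
    (altWalkCount G₁ G₂ (2 * k + 2) x : ℝ) ≤ c ^ k * d * G₁.degree x := by
  induction k generalizing x with
  | zero =>
    simp only [Nat.mul_zero, Nat.zero_add, altWalkCount_add_two, altWalkCount_zero,
      Finset.sum_const, smul_eq_mul, mul_one, ← SimpleGraph.card_neighborFinset_eq_degree]
    simp [SimpleGraph.card_neighborFinset_eq_degree, hreg.degree_eq, mul_comm]
  | succ k ih =>
    calc (altWalkCount G₁ G₂ (2 * (k + 1) + 2) x : ℝ)
        = ∑ y ∈ G₁.neighborFinset x, ∑ z ∈ G₂.neighborFinset y,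
            (altWalkCount G₁ G₂ (2 * k + 2) z : ℝ) := by
          rw [show 2 * (k + 1) + 2 = 2 * k + 2 + 2 by ring, altWalkCount_add_two]
          push_cast
          rfl
      _ ≤ ∑ y ∈ G₁.neighborFinset x, ∑ z ∈ G₂.neighborFinset y,
            c ^ k * d * (G₁.degree z : ℝ) := by
          gcongr with y _ z _
          exact ih z
      _ = c ^ k * d * ∑ y ∈ G₁.neighborFinset x, ∑ z ∈ G₂.neighborFinset y,
            (G₁.degree z : ℝ) := by
          simp only [Finset.mul_sum]
      _ ≤ c ^ k * d * (c * G₁.degree x) := by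
          gcongr
          exact hsum x
      _ = c ^ (k + 1) * d * G₁.degree x := by ring

end AlternatingWalks

lemma deg_eq_degree (G : SimpleGraph (Fin n)) (v : Fin n) [Fintype (G.neighborSet v)] :
    deg G v = G.degree v := by
  rw [deg, Nat.card_eq_fintype_card, SimpleGraph.card_neighborSet_eq_degree]

lemma IsRegularGraph.isRegularOfDegree {G : SimpleGraph (Fin n)} [G.LocallyFinite] {d : ℕ}
    (h : IsRegularGraph G d) : G.IsRegularOfDegree d := fun v => by
  rw [← deg_eq_degree, h v]

lemma doubleDegSum_eq_sum_neighborFinset (F K : SimpleGraph (Fin n)) [DecidableRel F.Adj]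
    [DecidableRel K.Adj] (v : Fin n) :
    doubleDegSum F K v = ∑ u ∈ (F \ K).neighborFinset v, ∑ u' ∈ K.neighborFinset u,
      ((F \ K).degree u' : ℝ) := by
  simp only [doubleDegSum, Finset.sum_ite, Finset.sum_const_zero, add_zero, deg_eq_degree]
  refine Finset.sum_congr (by ext; simp) fun u _ => Finset.sum_congr (by ext; simp) fun _ _ => rfl

lemma altStartCount_le_altWalkCount (G₁ G₂ : SimpleGraph (Fin n)) (k : ℕ) (x : Fin n) :
    altStartCount G₁ G₂ k x ≤ altWalkCount G₁ G₂ k x :=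
  Nat.card_le_card_of_injective (fun P => ⟨P.1, P.2.1.2, P.2.2⟩)
    fun _ _ h => Subtype.ext (Subtype.mk.inj h)

lemma one_add_div_pow_le_exp {t L : ℝ} {m : ℕ} (ht : 0 ≤ t) (hL : 0 < L)
    (hm : (m : ℝ) ≤ 10 * L) : (1 + t / L) ^ m ≤ Real.exp (10 * t) :=
  calc (1 + t / L) ^ m ≤ Real.exp (t / L) ^ m := by
        gcongr
        linarith [Real.add_one_le_exp (t / L)]
    _ = Real.exp (m * (t / L)) := (Real.exp_nat_mul _ m).symm
    _ ≤ Real.exp (10 * t) := by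
        refine Real.exp_le_exp.2 ?_
        rw [mul_div_assoc', div_le_iff₀ hL]
        nlinarith

lemma exp_ten_mul_mul_one_add_le {t : ℝ} (h0 : 0 ≤ t) (h1 : t ≤ 1 / 100) :
    Real.exp (10 * t) * (1 + t) ≤ 1 + 30 * t :=
  calc Real.exp (10 * t) * (1 + t) ≤ 1 / (1 - 10 * t) * (1 + t) := by
        gcongr
        exact Real.exp_bound_div_one_sub_of_interval (by linarith) (by linarith)
    _ ≤ 1 + 30 * t := by
        rw [div_mul_eq_mul_div, one_mul, div_le_iff₀ (by linarith)]
        nlinarith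

/-- **Lemma 5.2.** There is an absolute constant `c* > 0` such that for every
`λ ∈ (0,c*]`, every `n`, `d > 0`, `δ > 0`, `K ∈ 𝒦_d(n)` and graph `F` on `[n]`
satisfying (B1) `d_{F∖K}(v) ≤ (1+λ)δ` for all `v`, and (B2)
`Σ_{u∈N_{F∖K}(v)} Σ_{u'∈N_K(u)} d_{F∖K}(u') ≤ (1 + λ/log n)·δ·d·d_{F∖K}(v)` for all `v`,
the following holds: for every integer `1 ≤ ℓ ≤ 10 log n` and every `v`, the number of
`(F∖K,K)`-alternating paths of length `2ℓ` starting at `v` is at most `(1+30λ)·d^ℓ·δ^ℓ`. -/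
theorem upper_bound_paths_pseudorandom :
    ∃ cstar : ℝ, 0 < cstar ∧
      ∀ lam : ℝ, 0 < lam → lam ≤ cstar →
        ∀ n d : ℕ, ∀ δ : ℝ, 0 < d → 0 < δ →
          ∀ K F : SimpleGraph (Fin n), IsRegularGraph K d →
            (∀ v, (deg (F \ K) v : ℝ) ≤ (1 + lam) * δ) →
            (∀ v, doubleDegSum F K v ≤
              (1 + lam / Real.log n) * δ * d * (deg (F \ K) v : ℝ)) →
            ∀ ℓ : ℕ, 1 ≤ ℓ → (ℓ : ℝ) ≤ 10 * Real.log n →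
              ∀ v : Fin n,
                (altStartCount (F \ K) K (2 * ℓ) v : ℝ) ≤
                  (1 + 30 * lam) * (d : ℝ) ^ ℓ * δ ^ ℓ := by
  refine ⟨1 / 100, by norm_num, fun lam hlam hlam_le n d δ hd hδ K F hK hB1 hB2 ℓ hℓ hℓ_log v => ?_⟩
  obtain ⟨m, rfl⟩ : ∃ m, ℓ = m + 1 := ⟨ℓ - 1, by omega⟩
  push_cast at hℓ_log
  have hlog : 0 < Real.log n := by linarith [(m.cast_nonneg : (0 : ℝ) ≤ m)]
  set C := 1 + lam / Real.log n
  have hwalks := altWalkCount_two_mul_add_two_le (G₁ := F \ K) (c := C * δ * d) (by positivity)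
    hK.isRegularOfDegree (fun w => by
      rw [← doubleDegSum_eq_sum_neighborFinset, ← deg_eq_degree]
      exact hB2 w) m v
  calc (altStartCount (F \ K) K (2 * (m + 1)) v : ℝ)
      ≤ altWalkCount (F \ K) K (2 * m + 2) v := by
        exact_mod_cast altStartCount_le_altWalkCount (F \ K) K (2 * m + 2) v
    _ ≤ (C * δ * d) ^ m * d * (F \ K).degree v := hwalks
    _ ≤ (C * δ * d) ^ m * d * ((1 + lam) * δ) := by
        gcongr
        simpa only [deg_eq_degree] using hB1 v
    _ = C ^ m * (1 + lam) * (d ^ (m + 1) * δ ^ (m + 1)) := by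
        rw [mul_pow, mul_pow]
        ring
    _ ≤ Real.exp (10 * lam) * (1 + lam) * (d ^ (m + 1) * δ ^ (m + 1)) := by
        gcongr
        exact one_add_div_pow_le_exp (m := m) hlam.le hlog (by linarith)
    _ ≤ (1 + 30 * lam) * (d ^ (m + 1) * δ ^ (m + 1)) := by
        gcongr
        exact exp_ten_mul_mul_one_add_le hlam.le hlam_le
    _ = (1 + 30 * lam) * (d : ℝ) ^ (m + 1) * δ ^ (m + 1) := by ring

end Sandwich
end
end

section
/- There is c* > 0 such that for every σ ∈ (0, c*] and every c > 0 there is n₀ ∈ ℕ with the following property for all n ≥ n₀. Let 0 < p ≤ n^{σ−1} and let H ~ G(n,p). Then with probability at least 1 − c·n^{−14}: for every U ⊆ [n] with |U| ≤ 100·log n, the number of vertices v ∈ [n]∖U having at least 10 H-neighbours in U is at most 100·log n. (Lemma 6.8.) -/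
open scoped Classical ENNReal

noncomputable section

namespace Sandwich

variable {n : ℕ}

/-!
If some `U` with `|U| ≤ L = 100 log n` had `m = ⌊L⌋ + 1` outside vertices with at least `10`
neighbours in `U`, then `H` would contain `m` stars with distinct centres outside `U` and `10`
leaves each in `U`: `10m` distinct edges. Listing `U` by `m` vertices, there are at most
`n^m · n^m · m^{10m}` such configurations, each present with probability `p^{10m} ≤ n^{-9m}`.
As `m^{10} ≤ n^5`, the union bound gives `n^{-2m} ≤ n^{-16} ≤ c n^{-14}`.
-/

open Finset

section Probability

variable {α : Type*} (μ : PMF α)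

lemma prEvent_eq_toOuterMeasure (P : α → Prop) :
    prEvent μ P = μ.toOuterMeasure {a | P a} := by
  simp [prEvent, PMF.toOuterMeasure_apply, Set.indicator_apply]

lemma prEvent_mono {P Q : α → Prop} (h : ∀ a, P a → Q a) :
    prEvent μ P ≤ prEvent μ Q := by
  simp only [prEvent_eq_toOuterMeasure]
  exact MeasureTheory.measure_mono h

lemma prEvent_exists_le_sum {ι : Type*} [Fintype ι] (P : ι → α → Prop) :
    prEvent μ (fun a => ∃ i, P i a) ≤ ∑ i, prEvent μ (P i) := by
  simp only [prEvent_eq_toOuterMeasure, Set.ofPred_exists]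
  exact MeasureTheory.measure_iUnion_fintype_le _ _

lemma prEvent_add_prEvent_not (P : α → Prop) :
    prEvent μ P + prEvent μ (fun a => ¬ P a) = 1 := by
  rw [prEvent, prEvent, ← ENNReal.tsum_add, ← μ.tsum_coe]
  refine tsum_congr fun a => ?_
  by_cases h : P a <;> simp [h]

lemma ofReal_one_sub_le_prEvent {P : α → Prop} {ε : ℝ} (hε : 0 ≤ ε)
    (h : prEvent μ (fun a => ¬ P a) ≤ ENNReal.ofReal ε) :
    ENNReal.ofReal (1 - ε) ≤ prEvent μ P := by
  rw [ENNReal.ofReal_sub _ hε, ENNReal.ofReal_one,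
    ENNReal.eq_sub_of_add_eq (ne_top_of_le_ne_top ENNReal.ofReal_ne_top h)
      (prEvent_add_prEvent_not μ P)]
  exact tsub_le_tsub_left h 1

end Probability

lemma _root_.Finset.sum_Icc_pow_mul_pow {ι R : Type*} [DecidableEq ι] [CommSemiring R]
    {s t : Finset ι} (h : s ⊆ t) (a b : R) :
    ∑ u ∈ Icc s t, a ^ #u * b ^ (#t - #u) = a ^ #s * (a + b) ^ (#t - #s) := by
  have hdisj : ∀ v ∈ (t \ s).powerset, Disjoint s v := fun v hv =>
    disjoint_of_subset_right (mem_powerset.1 hv) disjoint_sdiff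
  rw [Icc_eq_image_powerset h, sum_image, ← card_sdiff_of_subset h, ← sum_pow_mul_eq_add_pow,
    mul_sum]
  · refine sum_congr rfl fun v hv => ?_
    rw [card_union_of_disjoint (hdisj v hv), pow_add, mul_assoc, Nat.sub_add_eq,
      card_sdiff_of_subset h]
  · intro v hv w hw hvw
    rw [← union_sdiff_cancel_left (hdisj v hv), ← union_sdiff_cancel_left (hdisj w hw)]
    exact congrArg (· \ s) hvw

lemma _root_.SimpleGraph.sum_edgeFinset_eq_sum_powerset {V β : Type*} [Fintype V]
    [DecidableEq V] [AddCommMonoid β] (F : Finset (Sym2 V) → β) :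
    ∑ G : SimpleGraph V, F G.edgeFinset =
      ∑ s ∈ (Sym2.diagSetᶜ : Set (Sym2 V)).toFinset.powerset, F s := by
  refine sum_nbij' (fun G => G.edgeFinset) (fun s => SimpleGraph.fromEdgeSet s) ?_ ?_ ?_ ?_ ?_
  · intro G _
    simpa [subset_iff] using fun e he => G.not_isDiag_of_mem_edgeSet he
  · simp
  · intro G _
    simp
  · intro s hs
    ext e
    simp only [Set.toFinset_compl, mem_powerset] at hs
    simpa using fun he => hs he
  · simp

lemma edgeCount_eq_card_edgeFinset (G : SimpleGraph (Fin n)) : edgeCount G = #G.edgeFinset := by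
  rw [edgeCount, ← SimpleGraph.coe_edgeFinset, Set.ncard_coe_finset]

lemma _root_.Set.nonempty_fin_embedding_of_le_ncard {α : Type*} [Finite α] {s : Set α} {m : ℕ}
    (h : m ≤ s.ncard) : Nonempty (Fin m ↪ s) := by
  have := Fintype.ofFinite s
  rw [← Nat.card_coe_set_eq, Nat.card_eq_fintype_card] at h
  exact Function.Embedding.nonempty_of_card_le (by simpa using h)

lemma _root_.Set.nonempty_embedding_fin_of_ncard_le {α : Type*} {s : Set α} [Finite s] {m : ℕ}
    (h : s.ncard ≤ m) : Nonempty (s ↪ Fin m) := by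
  have := Fintype.ofFinite s
  rw [← Nat.card_coe_set_eq, Nat.card_eq_fintype_card] at h
  exact Function.Embedding.nonempty_of_card_le (by simpa using h)

section Stars

variable {V : Type*} {m k : ℕ}

def richVertices (H : SimpleGraph V) (k : ℕ) (U : Set V) : Set V :=
  {v | v ∉ U ∧ k ≤ (H.neighborSet v ∩ U).ncard}

/-- A code `(centre, leaf, index)` for `m` stars with `k` leaves each: the `i`-th star joins
`centre i` to `leaf (index i j)` for `j : Fin k`, so all leaves lie among `m` vertices. -/
abbrev StarCode (V : Type*) (m k : ℕ) : Type _ :=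
  (Fin m → V) × (Fin m → V) × (Fin m → Fin k → Fin m)

def StarCode.edge (ω : StarCode V m k) (q : Fin m × Fin k) : Sym2 V :=
  s(ω.1 q.1, ω.2.1 (ω.2.2 q.1 q.2))

def StarCode.IsProper (ω : StarCode V m k) : Prop :=
  Function.Injective ω.edge ∧ ∀ q, ¬ (ω.edge q).IsDiag

lemma exists_starCode [Finite V] (H : SimpleGraph V) {U : Set V} (hU : U.ncard ≤ m)
    (hrich : m ≤ (richVertices H k U).ncard) :
    ∃ ω : StarCode V m k, ω.IsProper ∧ ∀ q, ω.edge q ∈ H.edgeSet := by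
  obtain ⟨centre⟩ := Set.nonempty_fin_embedding_of_le_ncard hrich
  obtain ⟨e⟩ := Set.nonempty_embedding_fin_of_ncard_le hU
  let leaves (i : Fin m) := (Set.nonempty_fin_embedding_of_le_ncard (centre i).2.2).some
  -- `extend` makes `leaf ∘ e` the inclusion of `U` without asking `V` to be inhabited
  let leaf : Fin m → V := Function.extend e Subtype.val (fun i => centre i)
  let index (i : Fin m) (j : Fin k) : Fin m := e ⟨leaves i j, (leaves i j).2.2⟩
  have hleaf (i : Fin m) (j : Fin k) : leaf (index i j) = leaves i j :=
    e.injective.extend_apply _ _ _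
  have hcentre (i : Fin m) : (centre i : V) ∉ U := (centre i).2.1
  refine ⟨(fun i => centre i, leaf, index), ⟨?_, ?_⟩, ?_⟩
  · rintro ⟨i, j⟩ ⟨i', j'⟩ h
    simp only [StarCode.edge, hleaf, Sym2.eq_iff] at h
    rcases h with ⟨hi, hj⟩ | ⟨hi, -⟩
    · obtain rfl := centre.injective (Subtype.ext hi)
      obtain rfl := (leaves i).injective (Subtype.ext hj)
      rfl
    · exact absurd (hi ▸ (leaves i' j').2.2) (hcentre i)
  · rintro ⟨i, j⟩ h
    simp only [StarCode.edge, hleaf, Sym2.mk_isDiag_iff] at h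
    exact hcentre i (h ▸ (leaves i j).2.2)
  · rintro ⟨i, j⟩
    simpa [StarCode.edge, hleaf] using (leaves i j).2.1

end Stars

section Gnp

variable {μ : PMF (SimpleGraph (Fin n))} {p : ℝ}

lemma IsGnp.prEvent_forall_mem_edgeSet (hμ : IsGnp μ p) (hp0 : 0 ≤ p) (hp1 : p ≤ 1)
    {E : Finset (Sym2 (Fin n))} (hE : ∀ e ∈ E, ¬ e.IsDiag) :
    prEvent μ (fun H => ∀ e ∈ E, e ∈ H.edgeSet) = ENNReal.ofReal (p ^ #E) := by
  set D := (Sym2.diagSetᶜ : Set (Sym2 (Fin n))).toFinset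
  have hD : #D = n.choose 2 := by
    simp only [D, Set.toFinset_card, Sym2.card_diagSet_compl, Fintype.card_fin]
  have hED : E ⊆ D := fun e he => by simpa [D] using hE e he
  have hweight : ∀ s ∈ D.powerset, 0 ≤ if E ⊆ s then p ^ #s * (1 - p) ^ (#D - #s) else 0 :=
    fun s _ => by have := sub_nonneg.2 hp1; split_ifs <;> positivity
  calc prEvent μ (fun H => ∀ e ∈ E, e ∈ H.edgeSet)
      = ∑ G : SimpleGraph (Fin n), ENNReal.ofReal (if E ⊆ G.edgeFinset then
          p ^ #G.edgeFinset * (1 - p) ^ (#D - #G.edgeFinset) else 0) := by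
        rw [prEvent, tsum_fintype]
        refine sum_congr rfl fun G _ => ?_
        simp [hμ G, edgeCount_eq_card_edgeFinset, hD, subset_iff, apply_ite ENNReal.ofReal]
    _ = ENNReal.ofReal (∑ s ∈ Icc E D, p ^ #s * (1 - p) ^ (#D - #s)) := by
        rw [SimpleGraph.sum_edgeFinset_eq_sum_powerset
          (fun s => ENNReal.ofReal (if E ⊆ s then p ^ #s * (1 - p) ^ (#D - #s) else 0)),
          ← ENNReal.ofReal_sum_of_nonneg hweight, Icc_eq_filter_powerset, sum_filter]
    _ = ENNReal.ofReal (p ^ #E) := by simp [sum_Icc_pow_mul_pow hED]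

lemma IsGnp.prEvent_starCode_le (hμ : IsGnp μ p) (hp0 : 0 ≤ p) (hp1 : p ≤ 1)
    {m k : ℕ} (ω : StarCode (Fin n) m k) :
    prEvent μ (fun H => ω.IsProper ∧ ∀ q, ω.edge q ∈ H.edgeSet) ≤
      ENNReal.ofReal (p ^ (m * k)) := by
  by_cases hω : ω.IsProper
  · calc prEvent μ (fun H => ω.IsProper ∧ ∀ q, ω.edge q ∈ H.edgeSet)
        ≤ prEvent μ (fun H => ∀ e ∈ univ.image ω.edge, e ∈ H.edgeSet) :=
          prEvent_mono μ fun H hH => forall_mem_image.2 fun q _ => hH.2 q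
      _ = ENNReal.ofReal (p ^ (m * k)) := by
          rw [hμ.prEvent_forall_mem_edgeSet hp0 hp1 (forall_mem_image.2 fun q _ => hω.2 q),
            card_image_of_injective _ hω.1]
          simp
  · simp [prEvent, hω]

lemma IsGnp.prEvent_exists_richVertices_le (hμ : IsGnp μ p) (hp0 : 0 ≤ p) (hp1 : p ≤ 1)
    (m k : ℕ) :
    prEvent μ (fun H =>
        ∃ U : Set (Fin n), U.ncard ≤ m ∧ m ≤ (richVertices H k U).ncard) ≤
      ENNReal.ofReal ((n : ℝ) ^ m * (n : ℝ) ^ m * ((m : ℝ) ^ k) ^ m * p ^ (m * k)) := by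
  calc prEvent μ (fun H => ∃ U : Set (Fin n), U.ncard ≤ m ∧ m ≤ (richVertices H k U).ncard)
      ≤ prEvent μ (fun H =>
          ∃ ω : StarCode (Fin n) m k, ω.IsProper ∧ ∀ q, ω.edge q ∈ H.edgeSet) :=
        prEvent_mono μ fun H ⟨_, hU, hrich⟩ => exists_starCode H hU hrich
    _ ≤ ∑ ω : StarCode (Fin n) m k,
          prEvent μ (fun H => ω.IsProper ∧ ∀ q, ω.edge q ∈ H.edgeSet) :=
        prEvent_exists_le_sum μ _
    _ ≤ ∑ _ω : StarCode (Fin n) m k, ENNReal.ofReal (p ^ (m * k)) :=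
        sum_le_sum fun ω _ => hμ.prEvent_starCode_le hp0 hp1 ω
    _ = ENNReal.ofReal ((n : ℝ) ^ m * (n : ℝ) ^ m * ((m : ℝ) ^ k) ^ m * p ^ (m * k)) := by
        rw [sum_const, card_univ, nsmul_eq_mul, ← ENNReal.ofReal_natCast,
          ← ENNReal.ofReal_mul (by positivity)]
        simp [mul_assoc]

end Gnp

lemma starCode_union_bound_le {n m : ℕ} {p σ c : ℝ} (hσ : σ ≤ 1 / 10) (hp0 : 0 ≤ p)
    (hp : p ≤ (n : ℝ) ^ (σ - 1)) (hm : 8 ≤ m) (hmn : (m : ℝ) ^ 2 ≤ n)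
    (hc : 1 ≤ c * n ^ 2) :
    (n : ℝ) ^ m * (n : ℝ) ^ m * ((m : ℝ) ^ 10) ^ m * p ^ (m * 10) ≤ c / (n : ℝ) ^ 14 := by
  have hm8 : (8 : ℝ) ≤ m := by exact_mod_cast hm
  have hn : (1 : ℝ) ≤ n := by nlinarith
  have hp10 : p ^ 10 * (n : ℝ) ^ 9 ≤ 1 := by
    have hp' : p ≤ (n : ℝ) ^ (-9 / 10 : ℝ) :=
      hp.trans (Real.rpow_le_rpow_of_exponent_le hn (by linarith))
    calc p ^ 10 * (n : ℝ) ^ 9 ≤ ((n : ℝ) ^ (-9 / 10 : ℝ)) ^ 10 * (n : ℝ) ^ 9 := by gcongr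
      _ = 1 := by
        rw [← Real.rpow_natCast, ← Real.rpow_natCast, ← Real.rpow_mul (by positivity),
          ← Real.rpow_add (by positivity)]
        norm_num
  have hm10 : (m : ℝ) ^ 10 ≤ (n : ℝ) ^ 5 := by
    calc (m : ℝ) ^ 10 = ((m : ℝ) ^ 2) ^ 5 := by ring
      _ ≤ (n : ℝ) ^ 5 := by gcongr
  have hbase : (n : ℝ) ^ 2 * (m : ℝ) ^ 10 * p ^ 10 ≤ ((n : ℝ) ^ 2)⁻¹ := by
    rw [← one_div, le_div_iff₀ (by positivity)]
    calc (n : ℝ) ^ 2 * (m : ℝ) ^ 10 * p ^ 10 * (n : ℝ) ^ 2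
        ≤ (n : ℝ) ^ 2 * (n : ℝ) ^ 5 * p ^ 10 * (n : ℝ) ^ 2 := by gcongr
      _ = p ^ 10 * (n : ℝ) ^ 9 := by ring
      _ ≤ 1 := hp10
  calc (n : ℝ) ^ m * (n : ℝ) ^ m * ((m : ℝ) ^ 10) ^ m * p ^ (m * 10)
      = ((n : ℝ) ^ 2 * (m : ℝ) ^ 10 * p ^ 10) ^ m := by ring
    _ ≤ (((n : ℝ) ^ 2)⁻¹) ^ m := by gcongr
    _ ≤ (((n : ℝ) ^ 2)⁻¹) ^ 8 := pow_le_pow_of_le_one (by positivity)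
          (inv_le_one_of_one_le₀ (one_le_pow₀ hn)) hm
    _ = ((n : ℝ) ^ 2)⁻¹ / (n : ℝ) ^ 14 := by ring
    _ ≤ c / (n : ℝ) ^ 14 := by
        gcongr
        rwa [inv_le_iff_one_le_mul₀ (by positivity)]

open Filter Real in
lemma eventually_log_bounds {c : ℝ} (hc : 0 < c) :
    ∀ᶠ n : ℕ in atTop,
      8 ≤ 100 * log n ∧ (100 * log n + 1) ^ 2 ≤ n ∧ 1 ≤ c * n ^ 2 := by
  refine tendsto_natCast_atTop_atTop.eventually (p := fun x : ℝ =>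
    8 ≤ 100 * log x ∧ (100 * log x + 1) ^ 2 ≤ x ∧ 1 ≤ c * x ^ 2) ?_
  have hlog := (isLittleO_log_rpow_atTop (by norm_num : (0 : ℝ) < 1 / 2)).bound
    (by norm_num : (0 : ℝ) < 1 / 200)
  have hsqrt := (tendsto_rpow_atTop (by norm_num : (0 : ℝ) < 1 / 2)).eventually_ge_atTop 2
  filter_upwards [hlog, hsqrt, eventually_ge_atTop (exp 1), eventually_ge_atTop c⁻¹,
    eventually_ge_atTop 1] with x hlog hsqrt he hcx hx
  have hlog1 : 1 ≤ log x := (le_log_iff_exp_le (by positivity)).2 he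
  rw [norm_of_nonneg (by linarith), norm_of_nonneg (by positivity)] at hlog
  refine ⟨by linarith, ?_, ?_⟩
  · calc (100 * log x + 1) ^ 2 ≤ (x ^ (1 / 2 : ℝ)) ^ 2 := by gcongr; linarith
      _ = x := by rw [← rpow_natCast, ← rpow_mul (by positivity)]; norm_num
  · have : 1 ≤ c * x := by rwa [← inv_le_iff_one_le_mul₀' hc]
    nlinarith

/-- **Lemma 6.8.** There is `c* > 0` such that for every `σ ∈ (0,c*]` and every `c > 0`,
for all sufficiently large `n`: if `0 < p ≤ n^{σ−1}` and `H ~ G(n,p)`, then with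
probability at least `1 − c n⁻¹⁴`, for every `U ⊆ [n]` with `|U| ≤ 100 log n`, the number
of vertices `v ∉ U` with at least `10` `H`-neighbours in `U` is at most `100 log n`. -/
theorem few_vertices_many_neighbours :
    ∃ cstar : ℝ, 0 < cstar ∧
      ∀ σ : ℝ, 0 < σ → σ ≤ cstar →
        ∀ c : ℝ, 0 < c →
          ∃ n₀ : ℕ, ∀ n : ℕ, n₀ ≤ n →
            ∀ p : ℝ, 0 < p → p ≤ (n : ℝ) ^ (σ - 1) →
              ∀ μ : PMF (SimpleGraph (Fin n)), IsGnp μ p →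
                ENNReal.ofReal (1 - c / (n : ℝ) ^ 14) ≤
                  prEvent μ (fun H =>
                    ∀ U : Set (Fin n), (U.ncard : ℝ) ≤ 100 * Real.log n →
                      ({v : Fin n | v ∉ U ∧
                          10 ≤ (H.neighborSet v ∩ U).ncard}.ncard : ℝ) ≤
                        100 * Real.log n) := by
  refine ⟨1 / 10, by norm_num, fun σ _ hσ c hc => ?_⟩
  obtain ⟨n₀, hn₀⟩ := Filter.eventually_atTop.1 (eventually_log_bounds hc)
  refine ⟨n₀, fun n hn p hp0 hp μ hμ => ?_⟩
  obtain ⟨hlog, hlog_sq, hcn⟩ := hn₀ n hn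
  set L := 100 * Real.log n
  -- the least integer above `L`: sizes `≤ L` are `≤ m`, sizes `> L` are `≥ m`
  set m := ⌊L⌋₊ + 1
  have hL : 0 ≤ L := by linarith
  have hLm : L < m := by simpa [m] using Nat.lt_floor_add_one L
  have hmL : (m : ℝ) ≤ L + 1 := by simpa [m] using Nat.floor_le hL
  have hm : 8 ≤ m := by exact_mod_cast hlog.trans hLm.le
  have hmn : (m : ℝ) ^ 2 ≤ n := (pow_le_pow_left₀ (by positivity) hmL 2).trans hlog_sq
  have hp1 : p ≤ 1 :=
    hp.trans (Real.rpow_le_one_of_one_le_of_nonpos (by nlinarith) (by linarith))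
  refine ofReal_one_sub_le_prEvent μ (by positivity) ?_
  calc prEvent μ _
      ≤ prEvent μ (fun H =>
          ∃ U : Set (Fin n), U.ncard ≤ m ∧ m ≤ (richVertices H 10 U).ncard) :=
        prEvent_mono μ fun H hH => by
          push Not at hH
          obtain ⟨U, hU, hrich⟩ := hH
          exact ⟨U, by exact_mod_cast hU.trans hLm.le, (Nat.floor_lt hL).2 hrich⟩
    _ ≤ _ := hμ.prEvent_exists_richVertices_le hp0.le hp1 m 10
    _ ≤ _ := ENNReal.ofReal_le_ofReal (starCode_union_bound_le hσ hp0.le hp hm hmn hcn)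

end Sandwich
end
end
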